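/- arXiv:math/9908144 — 2 statements merged into one kernel-verified Lean document; each statement's English description precedes it below -/
import Mathlib

section
/- For every real a, every real x, and all nonnegative integers j ≤ i, one has ∑_{k=j}^{i} C_{i-k}^{(a)}(x) C_{k-j}^{(-a)}(-x) = δ_{ij}, where δ_{ij} is the Kronecker delta (equal to 1 if i = j and 0 otherwise). -/
/-- Generalized binomial coefficient `x(x-1)⋯(x-k+1)/k!`. -/
noncomputable def genChoose (x : ℝ) (k : ℕ) : ℝ :=
  (∏ j ∈ Finset.range k, (x - (j : ℝ))) / (Nat.factorial k : ℝ)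

/-- The Charlier polynomial `C_n^{(a)}(x) = ∑_{k=0}^n (x choose k) (-a)^{n-k}/(n-k)!`. -/
noncomputable def charlier (a : ℝ) (n : ℕ) (x : ℝ) : ℝ :=
  ∑ k ∈ Finset.range (n + 1),
    genChoose x k * (-a) ^ (n - k) / (Nat.factorial (n - k) : ℝ)

/-- Charlier polynomial with integer index, with the convention `C_{-1}^{(a)} ≡ 0`. -/
noncomputable def charlierZ (a : ℝ) (n : ℤ) (x : ℝ) : ℝ :=
  if 0 ≤ n then charlier a n.toNat x else 0

/-- Forward difference operator `Δf(x) = f(x+1) - f(x)`. -/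
def fdiff (f : ℝ → ℝ) : ℝ → ℝ := fun x => f (x + 1) - f x

/-- Backward difference operator `∇f(x) = f(x) - f(x-1)`. -/
def bdiff (f : ℝ → ℝ) : ℝ → ℝ := fun x => f x - f (x - 1)

/-- The generalized Charlier polynomial
`C_n^{a,N}(x) = [1 + N(-1)^n C_n^{(a)}(-1)] C_n^{(a)}(x) - N(-1)^n C_n^{(a)}(0) C_n^{(a)}(x-1)`. -/
noncomputable def genCharlier (a N : ℝ) (n : ℕ) (x : ℝ) : ℝ :=
  (1 + N * (-1) ^ n * charlier a n (-1)) * charlier a n x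
    - N * (-1) ^ n * charlier a n 0 * charlier a n (x - 1)

/-- The coefficient `A_i(x)` (for `i ≥ 1`) of the difference equation. -/
noncomputable def Acoef (a : ℝ) (i : ℕ) (x : ℝ) : ℝ :=
  ∑ k ∈ Finset.Icc 1 i, (-1 : ℝ) ^ k * charlier (-a) (i - k) (-x + 1) *
    (charlier a k (-1) * charlier a k (x - 2) - charlier a k (-2) * charlier a k (x - 1))

/-- The coefficient `A_0 = (-1)^{n-1} C_{n-1}^{(a)}(-2)` (with `C_{-1}^{(a)} ≡ 0`). -/
noncomputable def A0coef (a : ℝ) (n : ℕ) : ℝ :=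
  (-1 : ℝ) ^ ((n : ℤ) - 1) * charlierZ a ((n : ℤ) - 1) (-2)

/-!
`C_n^{(a)}(x)` is the coefficient of `t^n` in `G_{a,x}(t) = (1 + t)^x e^{-a t}`, read as a formal
power series. Since `G_{a,x} G_{-a,-x} = (1 + t)^0 e^0 = 1`, comparing coefficients of `t^{i-j}`
gives the inverse relation.
-/

open Finset PowerSeries

lemma genChoose_eq_choose (x : ℝ) (k : ℕ) : genChoose x k = Ring.choose x k := by
  rw [Ring.choose_eq_smul, ← Polynomial.aeval_eq_smeval, Polynomial.aeval_def,
    ← Polynomial.eval_map, descPochhammer_map, descPochhammer_eval_eq_prod_range,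
    genChoose, smul_eq_mul, div_eq_inv_mul]

noncomputable def charlierGeneratingFunction (a x : ℝ) : ℝ⟦X⟧ :=
  PowerSeries.binomialSeries ℝ x * rescale (-a) (exp ℝ)

theorem coeff_charlierGeneratingFunction (a x : ℝ) (n : ℕ) :
    coeff n (charlierGeneratingFunction a x) = charlier a n x := by
  rw [charlierGeneratingFunction, coeff_mul, Nat.sum_antidiagonal_eq_sum_range_succ_mk, charlier]
  refine sum_congr rfl fun k _ => ?_
  simp [binomialSeries_coeff, genChoose_eq_choose, div_eq_mul_inv, mul_assoc]

theorem charlierGeneratingFunction_mul_neg (a x : ℝ) :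
    charlierGeneratingFunction a x * charlierGeneratingFunction (-a) (-x) = 1 := by
  rw [charlierGeneratingFunction, charlierGeneratingFunction, mul_mul_mul_comm,
    ← binomialSeries_add, exp_mul_exp_eq_exp_add, neg_neg, add_neg_cancel, neg_add_cancel,
    binomialSeries_zero, rescale_zero, one_mul]
  simp

theorem sum_Icc_sub_eq_sum_antidiagonal {M : Type*} [AddCommMonoid M] (f : ℕ → ℕ → M)
    {i j : ℕ} (h : j ≤ i) :
    ∑ k ∈ Icc j i, f (i - k) (k - j) = ∑ p ∈ antidiagonal (i - j), f p.1 p.2 := by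
  refine sum_nbij' (fun k => (i - k, k - j)) (fun p => p.2 + j) ?_ ?_ ?_ ?_ fun _ _ => rfl
  all_goals intro; simp only [mem_Icc, HasAntidiagonal.mem_antidiagonal]; grind

/-- For `j ≤ i`, `∑_{k=j}^i C_{i-k}^{(a)}(x) C_{k-j}^{(-a)}(-x) = δ_{ij}`. -/
theorem charlier_inverse_relation (a x : ℝ) (i j : ℕ) (hji : j ≤ i) :
    ∑ k ∈ Finset.Icc j i, charlier a (i - k) x * charlier (-a) (k - j) (-x)
      = if i = j then (1 : ℝ) else 0 := by
  simp_rw [← coeff_charlierGeneratingFunction]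
  rw [sum_Icc_sub_eq_sum_antidiagonal (fun m n => coeff m _ * coeff n _) hji, ← coeff_mul,
    charlierGeneratingFunction_mul_neg, coeff_one]
  simp [Nat.sub_eq_zero_iff_le, hji.ge_iff_eq']
end

section
/- Let a > 0. For all nonnegative integers m and n, ∑_{x=0}^∞ (e^{-a} a^x / x!) C_m^{(a)}(x) C_n^{(a)}(x) = (a^n / n!) δ_{mn}, where δ_{mn} is the Kronecker delta and the series (a sum over the nonnegative integers x) converges absolutely. -/
open Finset Nat Real

lemma genChoose_eq_descPochhammer_eval (x : ℝ) (k : ℕ) :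
    genChoose x k = (descPochhammer ℝ k).eval x / k ! := by
  rw [genChoose, descPochhammer_eval_eq_prod_range]

lemma genChoose_zero (x : ℝ) : genChoose x 0 = 1 := by
  simp [genChoose]

lemma genChoose_natCast (x k : ℕ) : genChoose x k = x.choose k := by
  rw [genChoose_eq_descPochhammer_eval, descPochhammer_eval_eq_descFactorial,
    descFactorial_eq_factorial_mul_choose, cast_mul, mul_div_cancel_left₀ _ (by positivity)]

lemma genChoose_add_one_succ (x : ℝ) (k : ℕ) :
    genChoose (x + 1) (k + 1) = genChoose x (k + 1) + genChoose x k := by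
  have hleft :
      (descPochhammer ℝ (k + 1)).eval (x + 1) = (x + 1) * (descPochhammer ℝ k).eval x := by
    simp [descPochhammer_succ_left]
  simp only [genChoose_eq_descPochhammer_eval, hleft, descPochhammer_succ_eval, factorial_succ,
    cast_mul, cast_succ]
  field_simp
  ring

lemma charlier_natCast (a : ℝ) (n x : ℕ) :
    charlier a n x = ∑ k ∈ range (n + 1), x.choose k * ((-a) ^ (n - k) / (n - k)!) := by
  simp only [charlier, genChoose_natCast, mul_div_assoc]

lemma charlier_zero (a x : ℝ) : charlier a 0 x = 1 := by
  simp [charlier, genChoose_zero]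

lemma charlier_succ_add_one (a x : ℝ) (m : ℕ) :
    charlier a (m + 1) (x + 1) = charlier a (m + 1) x + charlier a m x := by
  rw [charlier, charlier, charlier, sum_range_succ' _ (m + 1), sum_range_succ' _ (m + 1)]
  simp only [genChoose_add_one_succ, Nat.add_sub_add_right, add_mul, add_div, sum_add_distrib]
  simp only [genChoose_zero, tsub_zero, one_mul]
  ring

lemma sum_range_pow_div_factorial_mul {K : Type*} [Field K] [CharZero K] (x y : K) (m : ℕ) :
    ∑ k ∈ range (m + 1), x ^ k / k ! * (y ^ (m - k) / (m - k)!) = (x + y) ^ m / m ! := by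
  rw [add_pow, sum_div]
  refine sum_congr rfl fun k hk => ?_
  have hm : (m ! : K) ≠ 0 := cast_ne_zero.2 (factorial_ne_zero m)
  rw [cast_choose K (mem_range_succ_iff.mp hk)]
  field_simp

lemma HasSum.pow_div_factorial_mul_choose_mul {a s : ℝ} {f : ℕ → ℝ} (j : ℕ)
    (h : HasSum (fun y => a ^ y / y ! * f (y + j)) s) :
    HasSum (fun x => a ^ x / x ! * (x.choose j * f x)) (a ^ j / j ! * s) := by
  rw [← hasSum_nat_add_iff' j]
  have hlow : ∑ i ∈ range j, a ^ i / i ! * (i.choose j * f i) = 0 :=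
    sum_eq_zero fun i hi => by simp [choose_eq_zero_of_lt (mem_range.mp hi)]
  rw [hlow, sub_zero]
  have hshift : (fun y => a ^ (y + j) / (y + j)! * ((y + j).choose j * f (y + j)))
      = fun y => a ^ j / j ! * (a ^ y / y ! * f (y + j)) := by
    funext y
    rw [add_comm y j, cast_add_choose, pow_add]
    field_simp
  rw [hshift]
  exact h.mul_left _

lemma hasSum_pow_div_factorial (a : ℝ) : HasSum (fun x : ℕ => a ^ x / x !) (exp a) := by
  rw [exp_eq_exp_ℝ]
  exact NormedSpace.expSeries_div_hasSum_exp a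

lemma hasSum_pow_div_factorial_mul_choose (a : ℝ) (k : ℕ) :
    HasSum (fun x : ℕ => a ^ x / x ! * x.choose k) (a ^ k / k ! * exp a) := by
  simpa using HasSum.pow_div_factorial_mul_choose_mul (f := fun _ => 1) k
    (by simpa using hasSum_pow_div_factorial a)

lemma hasSum_pow_div_factorial_mul_charlier (a : ℝ) (m : ℕ) :
    HasSum (fun x : ℕ => a ^ x / x ! * charlier a m x) (if m = 0 then exp a else 0) := by
  have hterm : ∀ k ∈ range (m + 1), HasSum (fun x : ℕ => a ^ x / x ! * x.choose k *
      ((-a) ^ (m - k) / (m - k)!)) (a ^ k / k ! * exp a * ((-a) ^ (m - k) / (m - k)!)) :=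
    fun k _ => (hasSum_pow_div_factorial_mul_choose a k).mul_right _
  convert hasSum_sum hterm using 1
  · funext x
    rw [charlier_natCast, mul_sum]
    exact sum_congr rfl fun k _ => by ring
  · have hsum := sum_range_pow_div_factorial_mul a (-a) m
    simp only [mul_right_comm _ (exp a), ← sum_mul, hsum, add_neg_cancel]
    rcases m with _ | m <;> simp

lemma hasSum_pow_div_factorial_mul_charlier_add (a : ℝ) (j m : ℕ) :
    HasSum (fun y : ℕ => a ^ y / y ! * charlier a m ↑(y + j)) (j.choose m * exp a) := by
  induction j generalizing m with
  | zero =>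
    have h := hasSum_pow_div_factorial_mul_charlier a m
    rcases m with _ | m <;> simpa using h
  | succ j ih =>
    rcases m with _ | m
    · simpa [charlier_zero] using hasSum_pow_div_factorial a
    · convert (ih (m + 1)).add (ih m) using 1
      · funext y
        rw [← add_assoc, cast_succ, charlier_succ_add_one, mul_add]
      · rw [choose_succ_succ', cast_add, add_mul, add_comm]

lemma hasSum_charlier_mul_charlier (a : ℝ) (m n : ℕ) :
    HasSum (fun x : ℕ => exp (-a) * a ^ x / x ! * (charlier a m x * charlier a n x))
      (∑ j ∈ range (n + 1), (-a) ^ (n - j) / (n - j)! * (a ^ j / j ! * j.choose m)) := by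
  have hterm : ∀ j ∈ range (n + 1), HasSum
      (fun x : ℕ => exp (-a) * ((-a) ^ (n - j) / (n - j)!) *
        (a ^ x / x ! * (x.choose j * charlier a m x)))
      (exp (-a) * ((-a) ^ (n - j) / (n - j)!) * (a ^ j / j ! * (j.choose m * exp a))) :=
    fun j _ => ((hasSum_pow_div_factorial_mul_charlier_add a j m).pow_div_factorial_mul_choose_mul
      (f := fun x : ℕ => charlier a m x) j).mul_left _
  convert hasSum_sum hterm using 1
  · funext x
    rw [charlier_natCast a n, mul_sum, mul_sum]
    exact sum_congr rfl fun j _ => by ring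
  · have hexp : exp (-a) * exp a = 1 := by rw [← exp_add, neg_add_cancel, exp_zero]
    refine sum_congr rfl fun j _ => ?_
    linear_combination (-((-a) ^ (n - j) / (n - j)! * (a ^ j / j ! * j.choose m))) * hexp

lemma hasSum_charlier_mul_charlier_of_lt (a : ℝ) {m n : ℕ} (h : n < m) :
    HasSum (fun x : ℕ => exp (-a) * a ^ x / x ! * (charlier a m x * charlier a n x)) 0 := by
  convert hasSum_charlier_mul_charlier a m n
  refine (sum_eq_zero fun j hj => ?_).symm
  rw [choose_eq_zero_of_lt (by simp at hj; omega)]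
  simp

lemma hasSum_charlier_mul_self (a : ℝ) (n : ℕ) :
    HasSum (fun x : ℕ => exp (-a) * a ^ x / x ! * (charlier a n x * charlier a n x))
      (a ^ n / n !) := by
  convert hasSum_charlier_mul_charlier a n n
  rw [sum_range_succ, sum_eq_zero fun j hj => by rw [choose_eq_zero_of_lt (mem_range.mp hj)]; simp]
  simp

theorem charlier_orthogonal_general (a : ℝ) (m n : ℕ) :
    Summable (fun x : ℕ => Real.exp (-a) * a ^ x / (Nat.factorial x : ℝ) *
      (charlier a m x * charlier a n x)) ∧
    (∑' x : ℕ, Real.exp (-a) * a ^ x / (Nat.factorial x : ℝ) *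
      (charlier a m x * charlier a n x))
      = a ^ n / (Nat.factorial n : ℝ) * (if m = n then 1 else 0) := by
  suffices h : HasSum (fun x : ℕ => exp (-a) * a ^ x / x ! * (charlier a m x * charlier a n x))
      (a ^ n / n ! * if m = n then 1 else 0) from ⟨h.summable, h.tsum_eq⟩
  rcases lt_trichotomy m n with hmn | rfl | hmn
  · simpa only [mul_comm (charlier a m _), hmn.ne, if_false, mul_zero]
      using hasSum_charlier_mul_charlier_of_lt a hmn
  · simpa using hasSum_charlier_mul_self a m
  · simpa only [hmn.ne', if_false, mul_zero] using hasSum_charlier_mul_charlier_of_lt a hmn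

/-- Orthogonality of the classical Charlier polynomials:
`∑_{x=0}^∞ (e^{-a} a^x / x!) C_m^{(a)}(x) C_n^{(a)}(x) = (a^n / n!) δ_{mn}`,
the series converging absolutely. -/
theorem charlier_orthogonal (a : ℝ) (ha : 0 < a) (m n : ℕ) :
    Summable (fun x : ℕ => Real.exp (-a) * a ^ x / (Nat.factorial x : ℝ) *
      (charlier a m x * charlier a n x)) ∧
    (∑' x : ℕ, Real.exp (-a) * a ^ x / (Nat.factorial x : ℝ) *
      (charlier a m x * charlier a n x))
      = a ^ n / (Nat.factorial n : ℝ) * (if m = n then 1 else 0) :=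
  charlier_orthogonal_general a m n
end
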